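/- Let A: ℝ → Matrix (Fin 2) (Fin 2) ℝ, let n: ℝ → ℝ² be differentiable at t₀ with n'(t₀) = −A(t₀)ᵀ·n(t₀) + ((A(t₀)·n(t₀))·n(t₀))·n(t₀), set 𝒞(t) = I − n(t)⊗n(t), let Z: ℝ → ℝ be differentiable at t₀ with Z'(t₀) = Z(t₀)·Tr(A(t₀)ᵀ·𝒞(t₀)), and let f: ℝ → ℝ be differentiable at Z(t₀). Then the stress tensor σ(t) = f(Z(t))·𝒞(t) is differentiable at t₀ and σ'(t₀) = (f'(Z(t₀))·Z(t₀)·Tr(A(t₀)ᵀ·𝒞(t₀)))·𝒞(t₀) + f(Z(t₀))·( A(t₀)ᵀ·(n(t₀)⊗n(t₀)) + (n(t₀)⊗n(t₀))·A(t₀) − 2·((A(t₀)·n(t₀))·n(t₀))·(n(t₀)⊗n(t₀)) ). -/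

import Mathlib

open Matrix

attribute [local instance] Matrix.normedAddCommGroup Matrix.normedSpace

/-! The stress tensor is the product of the scalar `f ∘ Z` with the projector `𝒞 = I − n⊗n`,
so its derivative follows from the product and chain rules. The only computation is the
derivative of `n⊗n`: by the Leibniz rule it is `n'⊗n + n⊗n'`, and inserting the normal flow
`n' = −Aᵀn + ((An)·n)n` turns `(Aᵀn)⊗n` into `Aᵀ(n⊗n)` and `n⊗(Aᵀn) = n⊗(nA)` into `(n⊗n)A`. -/

section

variable {𝕜 : Type*} [NontriviallyNormedField 𝕜] {m l : Type*} [Fintype l]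

theorem HasDerivAt.vecMulVec {u : 𝕜 → m → 𝕜} {v : 𝕜 → l → 𝕜} {u' : m → 𝕜} {v' : l → 𝕜}
    {t : 𝕜} (hu : HasDerivAt u u' t) (hv : HasDerivAt v v' t) :
    HasDerivAt (fun s => vecMulVec (u s) (v s)) (vecMulVec u' (v t) + vecMulVec (u t) v') t :=
  hasDerivAt_pi.mpr fun i => hasDerivAt_pi.mpr fun j =>
    (hasDerivAt_pi.mp hu i).mul (hasDerivAt_pi.mp hv j)

theorem hasDerivAt_one_sub_vecMulVec_self_of_normal_flow [Fintype m] [DecidableEq m]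
    {n : 𝕜 → m → 𝕜} {t : 𝕜} (A : Matrix m m 𝕜) (c : 𝕜)
    (hn : HasDerivAt n (-(Aᵀ *ᵥ n t) + c • n t) t) :
    HasDerivAt (fun s => 1 - vecMulVec (n s) (n s))
      (Aᵀ * vecMulVec (n t) (n t) + vecMulVec (n t) (n t) * A
        - (2 * c) • vecMulVec (n t) (n t)) t := by
  refine ((hasDerivAt_const t (1 : Matrix m m 𝕜)).sub (hn.vecMulVec hn)).congr_deriv ?_
  rw [add_vecMulVec, vecMulVec_add, neg_vecMulVec, vecMulVec_neg, smul_vecMulVec,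
    vecMulVec_smul, mul_vecMulVec, vecMulVec_mul, mulVec_transpose]
  module

end

/-- Evolution equation (Proposition 3.1 / Appendix B) for the membrane stress
tensor `σ = f(Z)·𝒞` with `𝒞 = I − n⊗n`, along a characteristic: if
`n' = −Aᵀn + ((An)·n)n`, `Z' = Z·Tr(Aᵀ𝒞)` and `f` is differentiable at `Z(t₀)`,
then `σ` is differentiable at `t₀` and
`σ' = (f'(Z) Z Tr(Aᵀ𝒞)) 𝒞 + f(Z)(Aᵀ(n⊗n) + (n⊗n)A − 2((An)·n)(n⊗n))`. -/
theorem stress_tensor_evolution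
    (A : ℝ → Matrix (Fin 2) (Fin 2) ℝ) (n : ℝ → Fin 2 → ℝ) (t₀ : ℝ)
    (hn : HasDerivAt n (-((A t₀)ᵀ *ᵥ n t₀) + ((A t₀ *ᵥ n t₀) ⬝ᵥ n t₀) • n t₀) t₀)
    (C : ℝ → Matrix (Fin 2) (Fin 2) ℝ)
    (hC : C = fun t => 1 - vecMulVec (n t) (n t))
    (Z : ℝ → ℝ)
    (hZ : HasDerivAt Z (Z t₀ * ((A t₀)ᵀ * C t₀).trace) t₀)
    (f : ℝ → ℝ) (f' : ℝ) (hf : HasDerivAt f f' (Z t₀)) :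
    HasDerivAt (fun t => f (Z t) • C t)
      ((f' * Z t₀ * ((A t₀)ᵀ * C t₀).trace) • C t₀
        + f (Z t₀) •
          ((A t₀)ᵀ * vecMulVec (n t₀) (n t₀) + vecMulVec (n t₀) (n t₀) * A t₀
            - (2 * ((A t₀ *ᵥ n t₀) ⬝ᵥ n t₀)) • vecMulVec (n t₀) (n t₀))) t₀ := by
  have hfZ := hf.comp t₀ hZ
  have hproj := hasDerivAt_one_sub_vecMulVec_self_of_normal_flow (A t₀) _ hn
  rw [← hC] at hproj
  refine (hfZ.smul hproj).congr_deriv ?_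
  rw [add_comm, mul_assoc]
  rfl
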